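/- Let λ > μ > 0 and let M satisfy Condition (*) with s_M ≥ log√(λ/μ). Let (ν_x)_{x>0} be the laws of the absorption times, i.e. Borel probability measures on [0,∞) with ∫ e^{sy} ν_x(dy) = G_M(log G₀(s;λ,μ))·e^{xΛ(s;λ,μ)} (an equality in (0,∞]) for every s ≤ s*(λ,μ), and ∫ e^{sy} ν_x(dy) = ∞ for every s > s*(λ,μ). Define I₁(z) := (1/2)·(√((z−1)λ) − √((z+1)μ))² for z ≥ 1 and I₁(z) := +∞ for z < 1. Then: (a) for every closed set F ⊆ ℝ, limsup_{x→∞} (1/x)·log ν_x({y : y/x ∈ F}) ≤ −inf_{z∈F} I₁(z); (b) for every open set G ⊆ ℝ, liminf_{x→∞} (1/x)·log ν_x({y : y/x ∈ G}) ≥ −inf_{z∈G} I₁(z); (c) I₁ is lower semicontinuous with compact sublevel sets. -/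

import Mathlib

/-!
For `s < s*(λ,μ)` the exponential moments of `ν_x` are `C(s) e^{xΛ(s)}` with a finite constant
`C(s) = G_M(log G₀(s))`, finite because `G₀(s) < √(λ/μ)`; the large deviations are therefore
governed by `Λ` alone, whose Legendre transform is `I₁`: for `z > 1` the tilt `s(z)` solving
`Λ'(s) = z` gives `s(z) z − Λ(s(z)) = I₁(z)`.

Upper bound: split a closed set at `z₀ = (λ+μ)/(λ−μ) = Λ'(0)`, where `I₁` vanishes, and apply
Chernoff's inequality to the two half-lines through the points of the set nearest to `z₀`, with a
nonnegative tilt on the right and a nonpositive one on the left; for `z ≤ 1` one lets `s → −∞`.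

Lower bound: tilting by `s(z)` concentrates the mass on `[(z−δ)x, (z+δ)x]`, because
differentiability of `Λ` at `s(z)` makes the tilted weight of both tails exponentially negligible.
-/

open MeasureTheory ProbabilityTheory Filter
open scoped ENNReal

/-- `s*(λ,μ) = (√λ − √μ)²/2`. -/
noncomputable def sStar (l m : ℝ) : ℝ := (Real.sqrt l - Real.sqrt m) ^ 2 / 2

/-- `G₀(s;λ,μ)`. -/
noncomputable def Gzero (s l m : ℝ) : ℝ :=
  (l + m - 2 * s - Real.sqrt ((l + m - 2 * s) ^ 2 - 4 * l * m)) / (2 * m)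

/-- `Λ(s;λ,μ)`. -/
noncomputable def Lam (s l m : ℝ) : ℝ :=
  (l - m - Real.sqrt ((l + m - 2 * s) ^ 2 - 4 * l * m)) / 2

open Real Set Topology

noncomputable def rateFn (l m z : ℝ) : ℝ :=
  1 / 2 * (√((z - 1) * l) - √((z + 1) * m)) ^ 2

noncomputable def rate (l m z : ℝ) : ℝ≥0∞ :=
  if 1 ≤ z then ENNReal.ofReal (rateFn l m z) else ⊤

/-- The tilt solving `Λ'(s) = z`, so that `s z - Λ(s)` is maximal and equals `I₁(z)`. -/
noncomputable def optTilt (l m z : ℝ) : ℝ :=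
  (l + m) / 2 - √(l * m) * z / √(z ^ 2 - 1)

section Algebra

variable {l m s z : ℝ}

lemma sStar_eq (hl : 0 ≤ l) (hm : 0 ≤ m) : sStar l m = (l + m) / 2 - √(l * m) := by
  rw [sStar, Real.sqrt_mul hl, sub_sq, Real.sq_sqrt hl, Real.sq_sqrt hm]
  ring

lemma sStar_pos (hm : 0 < m) (hlm : m < l) : 0 < sStar l m :=
  div_pos (pow_pos (sub_pos.2 (Real.sqrt_lt_sqrt hm.le hlm)) 2) two_pos

lemma two_sqrt_mul_lt (hl : 0 ≤ l) (hm : 0 ≤ m) (hs : s < sStar l m) :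
    2 * √(l * m) < l + m - 2 * s := by
  rw [sStar_eq hl hm] at hs
  linarith

lemma add_sub_two_mul_pos (hl : 0 ≤ l) (hm : 0 ≤ m) (hs : s < sStar l m) :
    0 < l + m - 2 * s :=
  (mul_nonneg zero_le_two (Real.sqrt_nonneg _)).trans_lt (two_sqrt_mul_lt hl hm hs)

lemma disc_pos (hl : 0 ≤ l) (hm : 0 ≤ m) (hs : s < sStar l m) :
    0 < (l + m - 2 * s) ^ 2 - 4 * l * m := by
  have h := two_sqrt_mul_lt hl hm hs
  have hsq : √(l * m) ^ 2 = l * m := Real.sq_sqrt (mul_nonneg hl hm)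
  nlinarith [Real.sqrt_nonneg (l * m)]

lemma Lam_eq (hm : m ≠ 0) : Lam s l m = s - m + m * Gzero s l m := by
  rw [Lam, Gzero]
  field_simp
  ring

lemma Gzero_pos (hm : 0 < m) (hlm : m < l) (hs : s < sStar l m) : 0 < Gzero s l m := by
  have hl := hm.trans hlm
  have hu := add_sub_two_mul_pos hl.le hm.le hs
  refine div_pos (sub_pos.2 ?_) (by positivity)
  rw [Real.sqrt_lt' hu]
  nlinarith

lemma Gzero_lt_sqrt_div (hm : 0 < m) (hlm : m < l) (hs : s < sStar l m) :
    Gzero s l m < √(l / m) := by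
  have hl := hm.trans hlm
  have hu := two_sqrt_mul_lt hl.le hm.le hs
  have hsq : √(l * m) ^ 2 = l * m := Real.sq_sqrt (by positivity)
  have hlm' : √(l / m) = √(l * m) / m := by
    rw [show l / m = l * m / m ^ 2 by field_simp, Real.sqrt_div' _ (by positivity),
      Real.sqrt_sq hm.le]
  have hp : 0 < √(l * m) := Real.sqrt_pos.2 (by positivity)
  have hD : l + m - 2 * s - 2 * √(l * m) < √((l + m - 2 * s) ^ 2 - 4 * l * m) := by
    rw [Real.lt_sqrt (by linarith)]
    nlinarith [mul_lt_mul_of_pos_left hu hp]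
  rw [hlm', Gzero, div_lt_div_iff₀ (by positivity) hm]
  nlinarith

-- `(u − √D)(u + √D) = 4λμ` for `u = λ + μ − 2s`, `D = u² − 4λμ`.
lemma mul_Gzero_le (hm : 0 < m) (hlm : m < l) (hs : s < sStar l m) :
    m * Gzero s l m ≤ 2 * l * m / (l + m - 2 * s) := by
  have hl := hm.trans hlm
  have hD := disc_pos hl.le hm.le hs
  have hu := add_sub_two_mul_pos hl.le hm.le hs
  have hr := Real.sq_sqrt hD.le
  have hru : √((l + m - 2 * s) ^ 2 - 4 * l * m) ≤ l + m - 2 * s := by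
    rw [Real.sqrt_le_left hu.le]
    nlinarith
  rw [Gzero, le_div_iff₀ hu]
  set u := l + m - 2 * s
  set r := √(u ^ 2 - 4 * l * m)
  have hr0 : 0 ≤ r := Real.sqrt_nonneg _
  rw [show m * ((u - r) / (2 * m)) = (u - r) / 2 by field_simp]
  nlinarith [mul_le_mul_of_nonneg_left hru hr0]

lemma optTilt_lt_sStar (hm : 0 < m) (hlm : m < l) (hz : 1 < z) : optTilt l m z < sStar l m := by
  have hl := hm.trans hlm
  have hp : 0 < √(l * m) := Real.sqrt_pos.2 (by positivity)
  have hw : 0 < √(z ^ 2 - 1) := Real.sqrt_pos.2 (by nlinarith)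
  have hwz : √(z ^ 2 - 1) < z := by
    rw [Real.sqrt_lt' (by linarith)]
    linarith
  have : √(l * m) < √(l * m) * z / √(z ^ 2 - 1) := by
    rw [lt_div_iff₀ hw]
    nlinarith
  rw [sStar_eq hl.le hm.le, optTilt]
  linarith

lemma sqrt_disc_optTilt (hm : 0 < m) (hlm : m < l) (hz : 1 < z) :
    √((l + m - 2 * optTilt l m z) ^ 2 - 4 * l * m) = 2 * √(l * m) / √(z ^ 2 - 1) := by
  have hw : 0 < √(z ^ 2 - 1) := Real.sqrt_pos.2 (by nlinarith)
  have hw2 : √(z ^ 2 - 1) ^ 2 = z ^ 2 - 1 := Real.sq_sqrt (by nlinarith)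
  have hp2 : √(l * m) ^ 2 = l * m := Real.sq_sqrt (by nlinarith)
  rw [← Real.sqrt_sq (by positivity : 0 ≤ 2 * √(l * m) / √(z ^ 2 - 1))]
  congr 1
  rw [optTilt]
  field_simp
  nlinarith

lemma hasDerivAt_Lam (hm : 0 < m) (hlm : m < l) (hs : s < sStar l m) :
    HasDerivAt (fun σ => Lam σ l m)
      ((l + m - 2 * s) / √((l + m - 2 * s) ^ 2 - 4 * l * m)) s := by
  have hD := disc_pos (hm.trans hlm).le hm.le hs
  have hinner : HasDerivAt (fun σ : ℝ => (l + m - 2 * σ) ^ 2 - 4 * l * m)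
      (2 * (l + m - 2 * s) * (-2)) s := by
    have h := (((hasDerivAt_id s).const_mul 2).const_sub (l + m)).pow 2
    simpa using h.sub_const (4 * l * m)
  refine (((hinner.sqrt hD.ne').const_sub (l - m)).div_const 2).congr_deriv ?_
  field_simp

lemma hasDerivAt_Lam_optTilt (hm : 0 < m) (hlm : m < l) (hz : 1 < z) :
    HasDerivAt (fun σ => Lam σ l m) z (optTilt l m z) := by
  have hp : 0 < √(l * m) := Real.sqrt_pos.2 (by nlinarith)
  have hw : 0 < √(z ^ 2 - 1) := Real.sqrt_pos.2 (by nlinarith)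
  convert hasDerivAt_Lam hm hlm (optTilt_lt_sStar hm hlm hz) using 1
  rw [sqrt_disc_optTilt hm hlm hz, optTilt]
  field_simp
  ring

lemma optTilt_mul_sub_Lam (hm : 0 < m) (hlm : m < l) (hz : 1 < z) :
    optTilt l m z * z - Lam (optTilt l m z) l m = rateFn l m z := by
  have hl := hm.trans hlm
  have hw : 0 < √(z ^ 2 - 1) := Real.sqrt_pos.2 (by nlinarith)
  have hw2 : √(z ^ 2 - 1) ^ 2 = z ^ 2 - 1 := Real.sq_sqrt (by nlinarith)
  have hcross : √((z - 1) * l) * √((z + 1) * m) = √(z ^ 2 - 1) * √(l * m) := by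
    rw [← Real.sqrt_mul (by nlinarith), ← Real.sqrt_mul (by nlinarith)]
    ring_nf
  have hrate : rateFn l m z = ((z - 1) * l + (z + 1) * m - 2 * (√(z ^ 2 - 1) * √(l * m))) / 2 := by
    rw [rateFn, sub_sq, Real.sq_sqrt (by nlinarith), Real.sq_sqrt (by nlinarith), mul_assoc,
      hcross]
    ring
  rw [Lam, sqrt_disc_optTilt hm hlm hz, hrate, optTilt]
  field_simp
  linear_combination (2 * √(l * m)) * hw2

lemma optTilt_nonneg (hm : 0 < m) (hlm : m < l) (hz : (l + m) / (l - m) ≤ z) :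
    0 ≤ optTilt l m z := by
  have hl := hm.trans hlm
  have hz' : l + m ≤ z * (l - m) := (div_le_iff₀ (sub_pos.2 hlm)).1 hz
  have hz1 : 1 < z := by nlinarith
  have hw : 0 < √(z ^ 2 - 1) := Real.sqrt_pos.2 (by nlinarith)
  have hsq : (2 * √(l * m) * z) ^ 2 ≤ ((l + m) * √(z ^ 2 - 1)) ^ 2 := by
    rw [mul_pow, mul_pow, mul_pow, Real.sq_sqrt (by positivity), Real.sq_sqrt (by nlinarith)]
    nlinarith
  have h := (pow_le_pow_iff_left₀ (by positivity) (by positivity) two_ne_zero).1 hsq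
  rw [optTilt, sub_nonneg, div_le_iff₀ hw]
  linarith

lemma optTilt_nonpos (hm : 0 < m) (hlm : m < l) (hz1 : 1 < z) (hz : z ≤ (l + m) / (l - m)) :
    optTilt l m z ≤ 0 := by
  have hl := hm.trans hlm
  have hz' : z * (l - m) ≤ l + m := (le_div_iff₀ (sub_pos.2 hlm)).1 hz
  have hw : 0 < √(z ^ 2 - 1) := Real.sqrt_pos.2 (by nlinarith)
  have hsq : ((l + m) * √(z ^ 2 - 1)) ^ 2 ≤ (2 * √(l * m) * z) ^ 2 := by
    rw [mul_pow, mul_pow, mul_pow, Real.sq_sqrt (by nlinarith), Real.sq_sqrt (by positivity)]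
    nlinarith [mul_pos (sub_pos.2 hlm) (zero_lt_one.trans hz1)]
  have h := (pow_le_pow_iff_left₀ (by positivity)
    (mul_nonneg (by positivity) (zero_lt_one.trans hz1).le) two_ne_zero).1 hsq
  rw [optTilt, sub_nonpos, le_div_iff₀ hw]
  linarith

-- `Λ(s) − s b = s (1 − b) − μ + μ G₀(s)`, and `G₀(s) → 0` as `s → −∞`.
lemma exists_Lam_sub_mul_lt (hm : 0 < m) (hlm : m < l) {b c : ℝ} (hb : b ≤ 1)
    (hbc : b < 1 ∨ c < m) : ∃ s ≤ 0, Lam s l m - s * b < -c := by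
  have hbound : ∀ s ≤ 0, Lam s l m - s * b ≤ s * (1 - b) - m + 2 * l * m / (l + m - 2 * s) :=
    fun s hs => by
      rw [Lam_eq hm.ne']
      linarith [mul_Gzero_le hm hlm (hs.trans_lt (sStar_pos hm hlm))]
  have hsmall : Tendsto (fun s => 2 * l * m / (l + m - 2 * s)) atBot (𝓝 0) :=
    tendsto_const_nhds.div_atTop <| (tendsto_atTop_add_const_left _ (l + m)
      (tendsto_id.const_mul_atBot_of_neg (r := -2) (by norm_num))).congr fun s => by
        simp only [id]
        ring
  have hev : ∀ᶠ s in atBot, s * (1 - b) - m + 2 * l * m / (l + m - 2 * s) < -c := by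
    rcases hbc with hb1 | hcm
    · have h : Tendsto (fun s => s * (1 - b) + (-m + 2 * l * m / (l + m - 2 * s))) atBot atBot :=
        (tendsto_id.atBot_mul_const (sub_pos.2 hb1)).atBot_add (hsmall.const_add (-m))
      filter_upwards [h.eventually_lt_atBot (-c), eventually_le_atBot 0] with s hs _
      linarith
    · filter_upwards [hsmall.eventually_lt_const (sub_pos.2 hcm), eventually_le_atBot 0]
        with s hs hs0
      nlinarith
  obtain ⟨s, hs, hs0⟩ := (hev.and (eventually_le_atBot 0)).exists
  exact ⟨s, hs0, (hbound s hs0).trans_lt hs⟩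

end Algebra

section RateFunction

variable {l m z : ℝ}

lemma rateFn_nonneg (l m z : ℝ) : 0 ≤ rateFn l m z := by
  rw [rateFn]
  positivity

lemma continuous_rateFn (l m : ℝ) : Continuous (rateFn l m) := by
  unfold rateFn
  fun_prop

lemma rateFn_one (hm : 0 ≤ m) : rateFn l m 1 = m := by
  rw [rateFn, sub_self, zero_mul, Real.sqrt_zero, zero_sub, neg_sq, Real.sq_sqrt (by positivity)]
  ring

lemma coe_rate (l m z : ℝ) :
    (rate l m z : EReal) = if 1 ≤ z then ((rateFn l m z : ℝ) : EReal) else ⊤ := by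
  rw [rate]
  split_ifs
  · rw [EReal.coe_ennreal_ofReal, max_eq_left (rateFn_nonneg l m z)]
  · rfl

lemma lowerSemicontinuous_rate (l m : ℝ) : LowerSemicontinuous (rate l m) := by
  have h : rate l m =
      fun z => ENNReal.ofReal (rateFn l m z) + (Iio 1).indicator (fun _ => ⊤) z := by
    ext z
    by_cases hz : 1 ≤ z
    · simp [rate, hz]
    · simp [rate, hz, not_le.1 hz]
  rw [h]
  exact (ENNReal.continuous_ofReal.comp (continuous_rateFn l m)).lowerSemicontinuous.add
    (isOpen_Iio.lowerSemicontinuous_indicator bot_le)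

lemma sqrt_sub_one_mul_le_of_rateFn_le (hm : 0 < m) (hz : 1 ≤ z) {c : ℝ}
    (hc : rateFn l m z ≤ c) : √(z - 1) * (√l - √m) ≤ √(2 * c) + √(2 * m) := by
  have hplus : √((z + 1) * m) ≤ √(z - 1) * √m + √(2 * m) := by
    rw [Real.sqrt_le_left (by positivity), add_sq, mul_pow, Real.sq_sqrt (by linarith),
      Real.sq_sqrt hm.le, Real.sq_sqrt (by positivity)]
    nlinarith [mul_nonneg (mul_nonneg (Real.sqrt_nonneg (z - 1)) (Real.sqrt_nonneg m))
      (Real.sqrt_nonneg (2 * m))]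
  have hdiff : √((z - 1) * l) - √((z + 1) * m) ≤ √(2 * c) :=
    (le_abs_self _).trans (Real.abs_le_sqrt (by rw [rateFn] at hc; linarith))
  rw [Real.sqrt_mul (by linarith)] at hdiff
  linarith

lemma isCompact_rate_sublevel (hm : 0 < m) (hlm : m < l) (c : ℝ) :
    IsCompact {z | rate l m z ≤ ENNReal.ofReal c} := by
  set K := (√(2 * max c 0) + √(2 * m)) / (√l - √m)
  have hslm : 0 < √l - √m := sub_pos.2 (Real.sqrt_lt_sqrt hm.le hlm)
  refine (isCompact_Icc (a := 1) (b := 1 + K ^ 2)).of_isClosed_subset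
    ((lowerSemicontinuous_rate l m).isClosed_preimage _) fun z hz => ?_
  have hz1 : 1 ≤ z := by
    by_contra h
    simp [rate, h] at hz
  rw [Set.mem_ofPred_eq, rate, if_pos hz1, ENNReal.ofReal_le_ofReal_iff'] at hz
  have hc : rateFn l m z ≤ max c 0 := hz.elim (le_max_of_le_left ·) (le_max_of_le_right ·)
  have hK : √(z - 1) ≤ K := by
    rw [le_div_iff₀ hslm]
    exact sqrt_sub_one_mul_le_of_rateFn_le hm hz1 hc
  rw [Real.sqrt_le_left ((Real.sqrt_nonneg _).trans hK)] at hK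
  exact ⟨hz1, by linarith⟩

end RateFunction

lemma HasDerivAt.exists_gt_sub_lt {f : ℝ → ℝ} {f' x r b : ℝ} (hf : HasDerivAt f f' x)
    (hr : f' < r) (hb : x < b) : ∃ y, x < y ∧ y < b ∧ f y - f x < r * (y - x) := by
  have h := (hf.hasDerivWithinAt (s := Ioi x)).limsup_slope_le' (lt_irrefl x) hr
  obtain ⟨y, hy, hslope⟩ :=
    ((show ∀ᶠ y in 𝓝[>] x, y ∈ Ioo x b from Ioo_mem_nhdsGT hb).and h).exists
  refine ⟨y, hy.1, hy.2, ?_⟩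
  rwa [slope_def_field, div_lt_iff₀ (sub_pos.2 hy.1)] at hslope

lemma HasDerivAt.exists_lt_sub_lt {f : ℝ → ℝ} {f' x r : ℝ} (hf : HasDerivAt f f' x)
    (hr : r < f') : ∃ y < x, f y - f x < r * (y - x) := by
  have h := ((hasDerivWithinAt_iff_tendsto_slope' (s := Iio x) (lt_irrefl x)).1
    hf.hasDerivWithinAt).eventually (lt_mem_nhds hr)
  obtain ⟨y, hy, hslope⟩ :=
    ((show ∀ᶠ y in 𝓝[<] x, y ∈ Iio x from self_mem_nhdsWithin).and h).exists
  refine ⟨y, hy, ?_⟩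
  rwa [slope_def_field, lt_div_iff_of_neg (sub_neg.2 hy)] at hslope

lemma coe_ennreal_iInf {ι : Sort*} (f : ι → ℝ≥0∞) :
    ((⨅ i, f i : ℝ≥0∞) : EReal) = ⨅ i, (f i : EReal) :=
  Monotone.map_iInf_of_continuousAt continuous_coe_ennreal_ereal.continuousAt
    (fun _ _ => EReal.coe_ennreal_le_coe_ennreal_iff.2) rfl

lemma exists_lt_neg_of_lt_neg_iInf₂ {α : Type*} {S : Set α} {f : α → ℝ≥0∞} {w : EReal}
    (h : w < -((⨅ z ∈ S, f z : ℝ≥0∞) : EReal)) : ∃ z ∈ S, w < -(f z : EReal) := by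
  simp only [coe_ennreal_iInf] at h
  obtain ⟨z, hz⟩ := iInf_lt_iff.1 (EReal.lt_neg_comm.1 h)
  obtain ⟨hzS, hlt⟩ := iInf_lt_iff.1 hz
  exact ⟨z, hzS, EReal.lt_neg_comm.1 hlt⟩

lemma tendsto_inv_mul_log_ofReal_mul_exp {c : ℝ} (hc : 0 < c) (r : ℝ) :
    Tendsto (fun x : ℝ => ((x⁻¹ : ℝ) : EReal) * ENNReal.log (ENNReal.ofReal (c * exp (x * r))))
      atTop (𝓝 (r : EReal)) := by
  have h : Tendsto (fun x : ℝ => x⁻¹ * log c + r) atTop (𝓝 r) := by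
    simpa using (tendsto_inv_atTop_zero.mul_const (log c)).add_const r
  refine (EReal.tendsto_coe.2 h).congr' ?_
  filter_upwards [eventually_gt_atTop 0] with x hx
  rw [ENNReal.log_ofReal_of_pos (by positivity), log_mul hc.ne' (exp_ne_zero _), log_exp,
    ← EReal.coe_mul]
  congr 1
  field_simp

lemma inv_mul_log_le_inv_mul_log {x : ℝ} (hx : 0 < x) {a b : ℝ≥0∞} (hab : a ≤ b) :
    ((x⁻¹ : ℝ) : EReal) * ENNReal.log a ≤ ((x⁻¹ : ℝ) : EReal) * ENNReal.log b :=
  mul_le_mul_of_nonneg_left (ENNReal.log_monotone hab) (by exact_mod_cast (inv_pos.2 hx).le)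

lemma limsup_inv_mul_log_le {g : ℝ → ℝ≥0∞} {K : ℝ≥0∞} (hK : K ≠ ⊤) {r : ℝ}
    (h : ∀ᶠ x in atTop, g x ≤ K * ENNReal.ofReal (exp (x * r))) :
    limsup (fun x : ℝ => ((x⁻¹ : ℝ) : EReal) * ENNReal.log (g x)) atTop ≤ r := by
  have hK' : K ≤ ENNReal.ofReal (K.toReal + 1) := by
    rw [← ENNReal.ofReal_toReal hK]
    exact ENNReal.ofReal_le_ofReal (by simp)
  rw [← (tendsto_inv_mul_log_ofReal_mul_exp (by positivity : 0 < K.toReal + 1) r).limsup_eq]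
  refine limsup_le_limsup ?_
  filter_upwards [h, eventually_gt_atTop 0] with x hx hx0
  refine inv_mul_log_le_inv_mul_log hx0 (hx.trans ?_)
  rw [ENNReal.ofReal_mul (by positivity)]
  gcongr

lemma le_liminf_inv_mul_log {g : ℝ → ℝ≥0∞} {c r : ℝ} (hc : 0 < c)
    (h : ∀ᶠ x in atTop, ENNReal.ofReal (c * exp (x * r)) ≤ g x) :
    (r : EReal) ≤ liminf (fun x : ℝ => ((x⁻¹ : ℝ) : EReal) * ENNReal.log (g x)) atTop := by
  rw [← (tendsto_inv_mul_log_ofReal_mul_exp hc r).liminf_eq]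
  refine liminf_le_liminf ?_
  filter_upwards [h, eventually_gt_atTop 0] with x hx hx0
  exact inv_mul_log_le_inv_mul_log hx0 hx

lemma eventually_mul_ofReal_exp_le {K : ℝ≥0∞} (hK : K ≠ ⊤) {a b ε : ℝ} (hab : a < b)
    (hε : 0 < ε) :
    ∀ᶠ x in atTop, K * ENNReal.ofReal (exp (x * a)) ≤ ENNReal.ofReal (ε * exp (x * b)) := by
  have h : Tendsto (fun x => K.toReal * exp (-((b - a) * x))) atTop (𝓝 0) := by
    simpa using (tendsto_exp_atBot.comp (tendsto_neg_atTop_atBot.comp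
      (tendsto_id.const_mul_atTop (sub_pos.2 hab)))).const_mul K.toReal
  filter_upwards [h.eventually_lt_const hε] with x hx
  rw [← ENNReal.ofReal_toReal hK, ← ENNReal.ofReal_mul ENNReal.toReal_nonneg]
  refine ENNReal.ofReal_le_ofReal ?_
  calc K.toReal * exp (x * a) = K.toReal * exp (-((b - a) * x)) * exp (x * b) := by
        rw [mul_assoc, ← exp_add]
        ring_nf
    _ ≤ ε * exp (x * b) := by gcongr

lemma lintegral_ofReal_exp_ne_zero {Θ : Type*} [MeasurableSpace Θ] (Q : Measure Θ) [NeZero Q]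
    {g : Θ → ℝ} (hg : Measurable g) : ∫⁻ θ, ENNReal.ofReal (exp (g θ)) ∂Q ≠ 0 := by
  refine ((lintegral_pos_iff_support (by fun_prop)).2 ?_).ne'
  simp [Function.support, exp_pos, NeZero.ne Q]

lemma setLIntegral_exp_le_of_tilt (ν : Measure ℝ) {S : Set ℝ} {s t a : ℝ}
    (h : ∀ y ∈ S, t * a ≤ t * y) :
    ∫⁻ y in S, ENNReal.ofReal (exp (s * y)) ∂ν
      ≤ ENNReal.ofReal (exp (-(t * a))) * ∫⁻ y, ENNReal.ofReal (exp ((s + t) * y)) ∂ν :=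
  calc ∫⁻ y in S, ENNReal.ofReal (exp (s * y)) ∂ν
      ≤ ∫⁻ y in S, ENNReal.ofReal (exp (-(t * a))) * ENNReal.ofReal (exp ((s + t) * y)) ∂ν := by
        refine setLIntegral_mono (by fun_prop) fun y hy => ?_
        rw [← ENNReal.ofReal_mul (exp_nonneg _), ← exp_add]
        exact ENNReal.ofReal_le_ofReal (exp_le_exp.2 (by linarith [h y hy]))
    _ = ENNReal.ofReal (exp (-(t * a))) * ∫⁻ y in S, ENNReal.ofReal (exp ((s + t) * y)) ∂ν :=
        lintegral_const_mul _ (by fun_prop)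
    _ ≤ _ := mul_le_mul_right (setLIntegral_le_lintegral _ _) _

lemma measure_le_of_tilt (ν : Measure ℝ) {S : Set ℝ} {t a : ℝ} (h : ∀ y ∈ S, t * a ≤ t * y) :
    ν S ≤ ENNReal.ofReal (exp (-(t * a))) * ∫⁻ y, ENNReal.ofReal (exp (t * y)) ∂ν := by
  simpa using setLIntegral_exp_le_of_tilt ν (s := 0) h

lemma setLIntegral_exp_Icc_le (ν : Measure ℝ) (s z δ x : ℝ) :
    ∫⁻ y in Icc ((z - δ) * x) ((z + δ) * x), ENNReal.ofReal (exp (s * y)) ∂ν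
      ≤ ENNReal.ofReal (exp ((s * z + |s| * δ) * x)) * ν (Icc ((z - δ) * x) ((z + δ) * x)) := by
  rw [← setLIntegral_const]
  refine setLIntegral_mono measurable_const fun y hy => ENNReal.ofReal_le_ofReal ?_
  have hdist : |y - z * x| ≤ δ * x := abs_le.2 ⟨by linarith [hy.1], by linarith [hy.2]⟩
  have hs : s * (y - z * x) ≤ |s| * (δ * x) := (le_abs_self _).trans
    (by rw [abs_mul]; exact mul_le_mul_of_nonneg_left hdist (abs_nonneg s))
  exact exp_le_exp.2 (by linarith)

def HasMGF (ν : ℝ → Measure ℝ) (C : ℝ → ℝ≥0∞) (Λ : ℝ → ℝ) (S : ℝ) : Prop :=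
  ∀ x > 0, ∀ s < S, ∫⁻ y, ENNReal.ofReal (exp (s * y)) ∂(ν x) = C s * ENNReal.ofReal (exp (x * Λ s))

section ExponentialMoments

variable {ν : ℝ → Measure ℝ} {Λ : ℝ → ℝ} {C : ℝ → ℝ≥0∞} {S : ℝ}

lemma measure_div_mem_le (hΦ : HasMGF ν C Λ S) {T : Set ℝ} {x s p w : ℝ} (hx : 0 < x)
    (hs : s < S) (hT : ∀ v ∈ T, s * p ≤ s * v) (hw : Λ s - s * p ≤ w) :
    ν x {y | y / x ∈ T} ≤ C s * ENNReal.ofReal (exp (x * w)) := by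
  have hsub : ∀ y ∈ {y | y / x ∈ T}, s * (p * x) ≤ s * y := fun y hy => by
    have h := mul_le_mul_of_nonneg_right (hT _ hy) hx.le
    rwa [mul_assoc, mul_assoc, div_mul_cancel₀ _ hx.ne'] at h
  calc ν x {y | y / x ∈ T}
      ≤ ENNReal.ofReal (exp (-(s * (p * x)))) * (C s * ENNReal.ofReal (exp (x * Λ s))) :=
        (measure_le_of_tilt _ hsub).trans_eq (by rw [hΦ x hx s hs])
    _ = C s * ENNReal.ofReal (exp (x * (Λ s - s * p))) := by
        rw [mul_left_comm, ← ENNReal.ofReal_mul (exp_nonneg _), ← exp_add]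
        ring_nf
    _ ≤ C s * ENNReal.ofReal (exp (x * w)) := by gcongr

lemma eventually_setLIntegral_exp_le (hΦ : HasMGF ν C Λ S) (hC : ∀ s < S, C s ≠ ⊤)
    {T : ℝ → Set ℝ} {s s' a ε : ℝ} (hs' : s' < S)
    (hT : ∀ x > 0, ∀ y ∈ T x, (s' - s) * (a * x) ≤ (s' - s) * y)
    (hgap : Λ s' - (s' - s) * a < Λ s) (hε : 0 < ε) :
    ∀ᶠ x in atTop, ∫⁻ y in T x, ENNReal.ofReal (exp (s * y)) ∂(ν x)
      ≤ ENNReal.ofReal (ε * exp (x * Λ s)) := by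
  filter_upwards [eventually_gt_atTop 0, eventually_mul_ofReal_exp_le (hC s' hs') hgap hε]
    with x hx hsmall
  refine (setLIntegral_exp_le_of_tilt _ (hT x hx)).trans (le_trans (le_of_eq ?_) hsmall)
  rw [add_sub_cancel, hΦ x hx s' hs', mul_left_comm, ← ENNReal.ofReal_mul (exp_nonneg _),
    ← exp_add]
  ring_nf

lemma eventually_half_le_setLIntegral_exp_Icc (hΦ : HasMGF ν C Λ S) (hC : ∀ s < S, C s ≠ ⊤)
    {s z δ : ℝ} (hs : s < S) (hC0 : C s ≠ 0) (hΛ : HasDerivAt Λ z s) (hδ : 0 < δ) :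
    ∀ᶠ x in atTop, ENNReal.ofReal ((C s).toReal / 2 * exp (x * Λ s))
      ≤ ∫⁻ y in Icc ((z - δ) * x) ((z + δ) * x), ENNReal.ofReal (exp (s * y)) ∂(ν x) := by
  obtain ⟨s', hss', hs'S, hgap'⟩ := hΛ.exists_gt_sub_lt (lt_add_of_pos_right z hδ) hs
  obtain ⟨s'', hs''s, hgap''⟩ := hΛ.exists_lt_sub_lt (sub_lt_self z hδ)
  set c := (C s).toReal
  have hc : 0 < c := ENNReal.toReal_pos hC0 (hC s hs)
  have hright := eventually_setLIntegral_exp_le hΦ hC (T := fun x => Ioi ((z + δ) * x))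
    (ε := c / 4) hs'S (fun _ _ _ hy => mul_le_mul_of_nonneg_left hy.le (sub_pos.2 hss').le)
    (by linarith) (by positivity)
  have hleft := eventually_setLIntegral_exp_le hΦ hC (T := fun x => Iio ((z - δ) * x))
    (ε := c / 4) (hs''s.trans hs)
    (fun _ _ _ hy => mul_le_mul_of_nonpos_left hy.le (sub_neg.2 hs''s).le)
    (by linarith) (by positivity)
  filter_upwards [hright, hleft, eventually_gt_atTop 0] with x hr hl hx
  set B := Icc ((z - δ) * x) ((z + δ) * x)
  have htotal : ∫⁻ y, ENNReal.ofReal (exp (s * y)) ∂(ν x)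
      = ENNReal.ofReal (c / 2 * exp (x * Λ s)) + ENNReal.ofReal (c / 2 * exp (x * Λ s)) := by
    rw [← ENNReal.ofReal_add (by positivity) (by positivity), ← add_mul, add_halves,
      ENNReal.ofReal_mul ENNReal.toReal_nonneg, ENNReal.ofReal_toReal (hC s hs), hΦ x hx s hs]
  have hcover : Bᶜ ⊆ Iio ((z - δ) * x) ∪ Ioi ((z + δ) * x) := fun y hy => by
    rwa [mem_compl_iff, mem_Icc, not_and_or, not_le, not_le] at hy
  have htails : ∫⁻ y in Bᶜ, ENNReal.ofReal (exp (s * y)) ∂(ν x)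
      ≤ ENNReal.ofReal (c / 2 * exp (x * Λ s)) :=
    calc ∫⁻ y in Bᶜ, ENNReal.ofReal (exp (s * y)) ∂(ν x)
        ≤ (∫⁻ y in Iio ((z - δ) * x), ENNReal.ofReal (exp (s * y)) ∂(ν x))
          + ∫⁻ y in Ioi ((z + δ) * x), ENNReal.ofReal (exp (s * y)) ∂(ν x) :=
          (lintegral_mono_set hcover).trans (lintegral_union_le _ _ _)
      _ ≤ ENNReal.ofReal (c / 4 * exp (x * Λ s)) + ENNReal.ofReal (c / 4 * exp (x * Λ s)) :=
          add_le_add hl hr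
      _ = ENNReal.ofReal (c / 2 * exp (x * Λ s)) := by
          rw [← ENNReal.ofReal_add (by positivity) (by positivity)]
          ring_nf
  refine ENNReal.le_of_add_le_add_right (a := ENNReal.ofReal (c / 2 * exp (x * Λ s)))
    ENNReal.ofReal_ne_top ?_
  rw [← htotal, ← lintegral_add_compl _ (measurableSet_Icc : MeasurableSet B)]
  exact add_le_add_right htails _

lemma le_liminf_inv_mul_log_measure_Icc (hΦ : HasMGF ν C Λ S) (hC : ∀ s < S, C s ≠ ⊤)
    {s z δ : ℝ} (hs : s < S) (hC0 : C s ≠ 0) (hΛ : HasDerivAt Λ z s) (hδ : 0 < δ) :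
    ((Λ s - s * z - |s| * δ : ℝ) : EReal) ≤ liminf (fun x : ℝ => ((x⁻¹ : ℝ) : EReal) *
      ENNReal.log (ν x (Icc ((z - δ) * x) ((z + δ) * x)))) atTop := by
  have hc : 0 < (C s).toReal / 2 := half_pos (ENNReal.toReal_pos hC0 (hC s hs))
  refine le_liminf_inv_mul_log hc ?_
  filter_upwards [eventually_half_le_setLIntegral_exp_Icc hΦ hC hs hC0 hΛ hδ] with x hx
  have hexp : x * (Λ s - s * z - |s| * δ) = -((s * z + |s| * δ) * x) + x * Λ s := by ring
  set e := (s * z + |s| * δ) * x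
  calc ENNReal.ofReal ((C s).toReal / 2 * exp (x * (Λ s - s * z - |s| * δ)))
      = ENNReal.ofReal (exp (-e)) * ENNReal.ofReal ((C s).toReal / 2 * exp (x * Λ s)) := by
        rw [hexp, exp_add, ← ENNReal.ofReal_mul (exp_nonneg _)]
        congr 1
        ring
    _ ≤ ENNReal.ofReal (exp (-e))
        * (ENNReal.ofReal (exp e) * ν x (Icc ((z - δ) * x) ((z + δ) * x))) :=
        mul_le_mul_right (hx.trans (setLIntegral_exp_Icc_le _ _ _ _ _)) _
    _ = ν x (Icc ((z - δ) * x) ((z + δ) * x)) := by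
        rw [← mul_assoc, ← ENNReal.ofReal_mul (exp_nonneg _), ← exp_add, neg_add_cancel,
          exp_zero, ENNReal.ofReal_one, one_mul]

end ExponentialMoments

section AbsorptionTime

variable {l m : ℝ} {ν : ℝ → Measure ℝ} {C : ℝ → ℝ≥0∞}

lemma neg_rate_lt_iff {z w : ℝ} : -(rate l m z : EReal) < w ↔ (1 ≤ z → -rateFn l m z < w) := by
  rw [coe_rate]
  split_ifs with h
  · simp [h, ← EReal.coe_neg]
  · simp [h]

lemma exists_nonneg_tilt (hm : 0 < m) (hlm : m < l) {z w : ℝ} (hz : (l + m) / (l - m) ≤ z)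
    (hw : -(rate l m z : EReal) < w) : ∃ s, 0 ≤ s ∧ s < sStar l m ∧ Lam s l m - s * z < w := by
  have hz1 : 1 < z := ((one_lt_div (sub_pos.2 hlm)).2 (by linarith)).trans_le hz
  refine ⟨optTilt l m z, optTilt_nonneg hm hlm hz, optTilt_lt_sStar hm hlm hz1, ?_⟩
  linarith [optTilt_mul_sub_Lam hm hlm hz1, neg_rate_lt_iff.1 hw hz1.le]

lemma exists_nonpos_tilt (hm : 0 < m) (hlm : m < l) {z w : ℝ} (hz : z ≤ (l + m) / (l - m))
    (hw : -(rate l m z : EReal) < w) : ∃ s ≤ 0, Lam s l m - s * z < w := by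
  rcases lt_or_ge 1 z with hz1 | hz1
  · refine ⟨optTilt l m z, optTilt_nonpos hm hlm hz1 hz, ?_⟩
    linarith [optTilt_mul_sub_Lam hm hlm hz1, neg_rate_lt_iff.1 hw hz1.le]
  · have hbc : z < 1 ∨ -w < m := hz1.lt_or_eq.imp_right fun h => by
      have h' := neg_rate_lt_iff.1 hw h.ge
      rw [h, rateFn_one hm.le] at h'
      linarith
    obtain ⟨s, hs, hlt⟩ := exists_Lam_sub_mul_lt hm hlm hz1 hbc
    exact ⟨s, hs, by linarith⟩

lemma exists_measure_div_mem_inter_Ici_le (hm : 0 < m) (hlm : m < l)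
    (hΦ : HasMGF ν C (Lam · l m) (sStar l m)) (hC : ∀ s < sStar l m, C s ≠ ⊤)
    {F : Set ℝ} (hF : IsClosed F) {w : ℝ} (hw : ∀ v ∈ F, -(rate l m v : EReal) < w) :
    ∃ K ≠ ⊤, ∀ x > 0, ν x {y | y / x ∈ F ∩ Ici ((l + m) / (l - m))}
      ≤ K * ENNReal.ofReal (exp (x * w)) := by
  rcases (F ∩ Ici ((l + m) / (l - m))).eq_empty_or_nonempty with hR | hR
  · exact ⟨0, ENNReal.zero_ne_top, fun x _ => by simp [hR]⟩
  have hbdd : BddBelow (F ∩ Ici ((l + m) / (l - m))) := ⟨_, fun v hv => hv.2⟩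
  have ha := (hF.inter isClosed_Ici).csInf_mem hR hbdd
  obtain ⟨s, hs0, hs, hlt⟩ := exists_nonneg_tilt hm hlm ha.2 (hw _ ha.1)
  exact ⟨C s, hC s hs, fun x hx => measure_div_mem_le hΦ hx hs
    (fun v hv => mul_le_mul_of_nonneg_left (csInf_le hbdd hv) hs0) hlt.le⟩

lemma exists_measure_div_mem_inter_Iic_le (hm : 0 < m) (hlm : m < l)
    (hΦ : HasMGF ν C (Lam · l m) (sStar l m)) (hC : ∀ s < sStar l m, C s ≠ ⊤)
    {F : Set ℝ} (hF : IsClosed F) {w : ℝ} (hw : ∀ v ∈ F, -(rate l m v : EReal) < w) :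
    ∃ K ≠ ⊤, ∀ x > 0, ν x {y | y / x ∈ F ∩ Iic ((l + m) / (l - m))}
      ≤ K * ENNReal.ofReal (exp (x * w)) := by
  rcases (F ∩ Iic ((l + m) / (l - m))).eq_empty_or_nonempty with hL | hL
  · exact ⟨0, ENNReal.zero_ne_top, fun x _ => by simp [hL]⟩
  have hbdd : BddAbove (F ∩ Iic ((l + m) / (l - m))) := ⟨_, fun v hv => hv.2⟩
  have hb := (hF.inter isClosed_Iic).csSup_mem hL hbdd
  obtain ⟨s, hs0, hlt⟩ := exists_nonpos_tilt hm hlm hb.2 (hw _ hb.1)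
  have hs : s < sStar l m := hs0.trans_lt (sStar_pos hm hlm)
  exact ⟨C s, hC s hs, fun x hx => measure_div_mem_le hΦ hx hs
    (fun v hv => mul_le_mul_of_nonpos_left (le_csSup hbdd hv) hs0) hlt.le⟩

lemma limsup_inv_mul_log_measure_le (hm : 0 < m) (hlm : m < l)
    (hΦ : HasMGF ν C (Lam · l m) (sStar l m)) (hC : ∀ s < sStar l m, C s ≠ ⊤)
    {F : Set ℝ} (hF : IsClosed F) :
    limsup (fun x : ℝ => ((x⁻¹ : ℝ) : EReal) * ENNReal.log (ν x {y | y / x ∈ F})) atTop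
      ≤ -((⨅ z ∈ F, rate l m z : ℝ≥0∞) : EReal) := by
  refine EReal.le_of_forall_lt_iff_le.1 fun w hw => ?_
  have hwF : ∀ v ∈ F, -(rate l m v : EReal) < w := fun v hv =>
    (EReal.neg_le_neg_iff.2 (EReal.coe_ennreal_le_coe_ennreal_iff.2 (iInf₂_le v hv))).trans_lt hw
  obtain ⟨K₁, hK₁, h₁⟩ := exists_measure_div_mem_inter_Iic_le hm hlm hΦ hC hF hwF
  obtain ⟨K₂, hK₂, h₂⟩ := exists_measure_div_mem_inter_Ici_le hm hlm hΦ hC hF hwF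
  refine limsup_inv_mul_log_le (ENNReal.add_ne_top.2 ⟨hK₁, hK₂⟩) ?_
  filter_upwards [eventually_gt_atTop 0] with x hx
  have hsplit : {y | y / x ∈ F} ⊆ {y | y / x ∈ F ∩ Iic ((l + m) / (l - m))}
      ∪ {y | y / x ∈ F ∩ Ici ((l + m) / (l - m))} := fun y hy =>
    (le_total (y / x) ((l + m) / (l - m))).imp (⟨hy, ·⟩) (⟨hy, ·⟩)
  calc ν x {y | y / x ∈ F}
      ≤ ν x {y | y / x ∈ F ∩ Iic ((l + m) / (l - m))}
        + ν x {y | y / x ∈ F ∩ Ici ((l + m) / (l - m))} :=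
        (measure_mono hsplit).trans (measure_union_le _ _)
    _ ≤ (K₁ + K₂) * ENNReal.ofReal (exp (x * w)) := by
        rw [add_mul]
        exact add_le_add (h₁ x hx) (h₂ x hx)

lemma neg_rateFn_le_liminf (hm : 0 < m) (hlm : m < l)
    (hΦ : HasMGF ν C (Lam · l m) (sStar l m)) (hC : ∀ s < sStar l m, C s ≠ ⊤)
    (hC0 : ∀ s, C s ≠ 0) {G : Set ℝ} {z : ℝ} (hG : G ∈ 𝓝 z) (hz : 1 < z) :
    ((-rateFn l m z : ℝ) : EReal)
      ≤ liminf (fun x : ℝ => ((x⁻¹ : ℝ) : EReal) * ENNReal.log (ν x {y | y / x ∈ G})) atTop := by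
  refine EReal.ge_of_forall_gt_iff_ge.1 fun w hw => ?_
  have hw' : w < -rateFn l m z := EReal.coe_lt_coe_iff.1 hw
  set s := optTilt l m z
  obtain ⟨ε, hε, hball⟩ := Metric.mem_nhds_iff.1 hG
  set δ := min (ε / 2) ((-rateFn l m z - w) / (|s| + 1))
  have hδ : 0 < δ := lt_min (half_pos hε) (div_pos (by linarith) (by positivity))
  have hsδ : |s| * δ ≤ -rateFn l m z - w := by
    have h := (le_div_iff₀ (by positivity : 0 < |s| + 1)).1 (min_le_right _ _ : δ ≤ _)
    nlinarith
  have hδε : δ < ε := (min_le_left _ _).trans_lt (half_lt_self hε)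
  have hIcc : ∀ x > 0, Icc ((z - δ) * x) ((z + δ) * x) ⊆ {y | y / x ∈ G} := fun x hx y hy => by
    refine hball (Metric.closedBall_subset_ball hδε ?_)
    rw [Real.closedBall_eq_Icc]
    exact ⟨(le_div_iff₀ hx).2 hy.1, (div_le_iff₀ hx).2 hy.2⟩
  have hs := optTilt_lt_sStar hm hlm hz
  calc (w : EReal) ≤ ((Lam s l m - s * z - |s| * δ : ℝ) : EReal) :=
        EReal.coe_le_coe_iff.2 (by linarith [optTilt_mul_sub_Lam hm hlm hz])
    _ ≤ liminf (fun x : ℝ => ((x⁻¹ : ℝ) : EReal) *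
          ENNReal.log (ν x (Icc ((z - δ) * x) ((z + δ) * x)))) atTop :=
        le_liminf_inv_mul_log_measure_Icc hΦ hC hs (hC0 s)
          (hasDerivAt_Lam_optTilt hm hlm hz) hδ
    _ ≤ _ := liminf_le_liminf <| by
        filter_upwards [eventually_gt_atTop 0] with x hx
        exact inv_mul_log_le_inv_mul_log hx (measure_mono (hIcc x hx))

lemma neg_rate_le_liminf (hm : 0 < m) (hlm : m < l)
    (hΦ : HasMGF ν C (Lam · l m) (sStar l m)) (hC : ∀ s < sStar l m, C s ≠ ⊤)
    (hC0 : ∀ s, C s ≠ 0) {G : Set ℝ} (hG : IsOpen G) {z : ℝ} (hz : z ∈ G) :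
    -(rate l m z : EReal)
      ≤ liminf (fun x : ℝ => ((x⁻¹ : ℝ) : EReal) * ENNReal.log (ν x {y | y / x ∈ G})) atTop := by
  rw [coe_rate]
  split_ifs with h1
  · refine EReal.ge_of_forall_gt_iff_ge.1 fun w hw => ?_
    have hU : IsOpen (G ∩ {v | w < -rateFn l m v}) :=
      hG.inter (isOpen_lt continuous_const (continuous_rateFn l m).neg)
    have hzU : z ∈ G ∩ {v | w < -rateFn l m v} := ⟨hz, EReal.coe_lt_coe_iff.1 hw⟩
    obtain ⟨z', ⟨hz'G, hz'w⟩, hzz'⟩ :=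
      ((show ∀ᶠ v in 𝓝[>] z, v ∈ G ∩ {v | w < -rateFn l m v} from
        mem_nhdsWithin_of_mem_nhds (hU.mem_nhds hzU)).and self_mem_nhdsWithin).exists
    exact (EReal.coe_le_coe_iff.2 hz'w.le).trans
      (neg_rateFn_le_liminf hm hlm hΦ hC hC0 (hG.mem_nhds hz'G) (h1.trans_lt hzz'))
  · simp

lemma neg_iInf_rate_le_liminf (hm : 0 < m) (hlm : m < l)
    (hΦ : HasMGF ν C (Lam · l m) (sStar l m)) (hC : ∀ s < sStar l m, C s ≠ ⊤)
    (hC0 : ∀ s, C s ≠ 0) {G : Set ℝ} (hG : IsOpen G) :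
    -((⨅ z ∈ G, rate l m z : ℝ≥0∞) : EReal)
      ≤ liminf (fun x : ℝ => ((x⁻¹ : ℝ) : EReal) * ENNReal.log (ν x {y | y / x ∈ G})) atTop := by
  refine EReal.ge_of_forall_gt_iff_ge.1 fun w hw => ?_
  obtain ⟨z, hzG, hz⟩ := exists_lt_neg_of_lt_neg_iInf₂ hw
  exact hz.le.trans (neg_rate_le_liminf hm hlm hΦ hC hC0 hG hzG)

end AbsorptionTime

theorem ldp_scaling1_caseA_general
    {Θ : Type*} [MeasurableSpace Θ] (Q : Measure Θ) [IsProbabilityMeasure Q]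
    (M : Θ → ℕ) (hMmeas : Measurable M)
    (l m : ℝ) (hlm : m < l) (hm : 0 < m)
    -- Condition (*) with s_M ≥ log√(λ/μ)
    (hsM : ∀ r : ℝ, r < Real.log (Real.sqrt (l / m)) →
      ∫⁻ θ, ENNReal.ofReal (Real.exp (r * (M θ : ℝ))) ∂Q < ⊤)
    -- the laws ν_x of the absorption times A_x(λ,μ)
    (ν : ℝ → Measure ℝ)
    (hmgf_le : ∀ x > 0, ∀ s ≤ sStar l m,
      ∫⁻ y, ENNReal.ofReal (Real.exp (s * y)) ∂(ν x)
        = (∫⁻ θ, ENNReal.ofReal (Real.exp (Real.log (Gzero s l m) * (M θ : ℝ))) ∂Q)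
            * ENNReal.ofReal (Real.exp (x * Lam s l m)))
    -- the rate function I₁
    (I : ℝ → ℝ≥0∞)
    (hI : ∀ z : ℝ, I z = if 1 ≤ z then
      ENNReal.ofReal (1 / 2 * (Real.sqrt ((z - 1) * l) - Real.sqrt ((z + 1) * m)) ^ 2) else ⊤) :
    -- (a) upper bound for closed sets
    (∀ F : Set ℝ, IsClosed F →
      limsup (fun x : ℝ => ((x⁻¹ : ℝ) : EReal) * ENNReal.log (ν x {y | y / x ∈ F})) atTop
        ≤ -((⨅ z ∈ F, I z : ℝ≥0∞) : EReal))
    -- (b) lower bound for open sets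
    ∧ (∀ G : Set ℝ, IsOpen G →
      -((⨅ z ∈ G, I z : ℝ≥0∞) : EReal)
        ≤ liminf (fun x : ℝ => ((x⁻¹ : ℝ) : EReal) * ENNReal.log (ν x {y | y / x ∈ G})) atTop)
    -- (c) goodness of the rate function
    ∧ LowerSemicontinuous I
    ∧ (∀ c : ℝ, IsCompact {z : ℝ | I z ≤ ENNReal.ofReal c}) := by
  obtain rfl : I = rate l m := funext hI
  set C : ℝ → ℝ≥0∞ := fun s => ∫⁻ θ, ENNReal.ofReal (exp (log (Gzero s l m) * (M θ : ℝ))) ∂Q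
  have hΦ : HasMGF ν C (Lam · l m) (sStar l m) := fun x hx s hs => hmgf_le x hx s hs.le
  have hC : ∀ s < sStar l m, C s ≠ ⊤ := fun s hs =>
    (hsM _ (log_lt_log (Gzero_pos hm hlm hs) (Gzero_lt_sqrt_div hm hlm hs))).ne
  have hC0 : ∀ s, C s ≠ 0 := fun s => lintegral_ofReal_exp_ne_zero Q (by fun_prop)
  exact ⟨fun F hF => limsup_inv_mul_log_measure_le hm hlm hΦ hC hF,
    fun G hG => neg_iInf_rate_le_liminf hm hlm hΦ hC hC0 hG,
    lowerSemicontinuous_rate l m, isCompact_rate_sublevel hm hlm⟩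

/-- LDP for `A_x(λ,μ)/x` as `x → ∞`, Case A: `s_M ≥ log√(λ/μ)`.
The abscissa condition `s_M ≥ log√(λ/μ)` is encoded as: `G_M(r) < ∞` for every
`r < log√(λ/μ)` (equivalent, since the effective domain of `G_M` is downward closed). -/
theorem ldp_scaling1_caseA
    {Θ : Type*} [MeasurableSpace Θ] (Q : Measure Θ) [IsProbabilityMeasure Q]
    (M : Θ → ℕ) (hMmeas : Measurable M) (hM1 : ∀ θ, 1 ≤ M θ)
    (l m : ℝ) (hlm : m < l) (hm : 0 < m)
    -- Condition (*) with s_M ≥ log√(λ/μ)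
    (hsM : ∀ r : ℝ, r < Real.log (Real.sqrt (l / m)) →
      ∫⁻ θ, ENNReal.ofReal (Real.exp (r * (M θ : ℝ))) ∂Q < ⊤)
    -- the laws ν_x of the absorption times A_x(λ,μ)
    (ν : ℝ → Measure ℝ) (hprob : ∀ x > 0, IsProbabilityMeasure (ν x))
    (hsupp : ∀ x > 0, ν x (Set.Iio 0) = 0)
    (hmgf_le : ∀ x > 0, ∀ s ≤ sStar l m,
      ∫⁻ y, ENNReal.ofReal (Real.exp (s * y)) ∂(ν x)
        = (∫⁻ θ, ENNReal.ofReal (Real.exp (Real.log (Gzero s l m) * (M θ : ℝ))) ∂Q)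
            * ENNReal.ofReal (Real.exp (x * Lam s l m)))
    (hmgf_gt : ∀ x > 0, ∀ s > sStar l m,
      ∫⁻ y, ENNReal.ofReal (Real.exp (s * y)) ∂(ν x) = ⊤)
    -- the rate function I₁
    (I : ℝ → ℝ≥0∞)
    (hI : ∀ z : ℝ, I z = if 1 ≤ z then
      ENNReal.ofReal (1 / 2 * (Real.sqrt ((z - 1) * l) - Real.sqrt ((z + 1) * m)) ^ 2) else ⊤) :
    -- (a) upper bound for closed sets
    (∀ F : Set ℝ, IsClosed F →
      limsup (fun x : ℝ => ((x⁻¹ : ℝ) : EReal) * ENNReal.log (ν x {y | y / x ∈ F})) atTop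
        ≤ -((⨅ z ∈ F, I z : ℝ≥0∞) : EReal))
    -- (b) lower bound for open sets
    ∧ (∀ G : Set ℝ, IsOpen G →
      -((⨅ z ∈ G, I z : ℝ≥0∞) : EReal)
        ≤ liminf (fun x : ℝ => ((x⁻¹ : ℝ) : EReal) * ENNReal.log (ν x {y | y / x ∈ G})) atTop)
    -- (c) goodness of the rate function
    ∧ LowerSemicontinuous I
    ∧ (∀ c : ℝ, IsCompact {z : ℝ | I z ≤ ENNReal.ofReal c}) :=
  ldp_scaling1_caseA_general Q M hMmeas l m hlm hm hsM ν hmgf_le I hI
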